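/- arXiv:2006.15441 — 6 statements merged into one kernel-verified Lean document; each statement's English description precedes it below -/
import Mathlib

section
/- For every polyhedral cone domain Ω ⊆ ℝ^{n+1} there exists a constant B ∈ (0, 1/4) (depending only on Ω) with the following property: for every i ∈ {0, 1, …, n+1}, every x ∈ ∂_iΩ, and every y ∈ ℝ^{n+1} with |y − x| < 2B·dist(x, ∂_{i−1}Ω), one has y ∈ Ω if and only if y − x ∈ T_xΩ. Here dist(x, ∅) is interpreted as +∞. -/
open scoped RealInnerProductSpace ENNReal NNReal

/-!
Fourier–Motzkin elimination shows that a polyhedral cone is generated by finitely many vectors.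
This yields a Hoffman-type bound: write `x ∈ K` as a conic combination of generators `w` and drop
those with `⟪w, a⟫ < 0`; each dropped coefficient is at most `-⟪x, a⟫ / -⟪w, a⟫`, so the point
obtained lies in the face `K ∩ {⟪·, a⟫ = 0}` at distance `≤ C · (-⟪x, a⟫)` from `x`.
Applied to the face of `Ω` through `x ∈ ∂_iΩ` and an inactive constraint `ν_j`, this gives a point
of `∂_{i-1}Ω`, so `dist(x, ∂_{i-1}Ω) ≤ C · (-⟪x, ν_j⟫)` with `C` uniform over the finitely many
active sets. If `|y - x| < 2B · dist(x, ∂_{i-1}Ω)` and `2BC < 1`, every inactive constraint is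
therefore still strict at `y`, and membership of `y` in `Ω` is decided by the active ones.
-/

/-- The `k`-th stratum (for `k : ℤ`, with `k = -1` giving `∅`) of the polyhedral cone
domain `⋂ j, {x | ⟪x, ν j⟫ ≤ 0}`: points `x` of the domain such that the linear subspace
`⋂_{j : ⟪x, ν j⟫ = 0} ∂H_j` has dimension at most `k`. -/
noncomputable def stratumLE (n N : ℕ) (ν : Fin N → EuclideanSpace ℝ (Fin (n + 1)))
    (k : ℤ) : Set (EuclideanSpace ℝ (Fin (n + 1))) :=
  {x | (∀ j, ⟪x, ν j⟫ ≤ 0) ∧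
    (Module.finrank ℝ
      ↥(⨅ j ∈ {j : Fin N | ⟪x, ν j⟫ = 0}, (Submodule.span ℝ {ν j})ᗮ) : ℤ) ≤ k}

open Finset PointedCone

section PolarCone

variable {E : Type*} [NormedAddCommGroup E] [InnerProductSpace ℝ E]

def polarCone (s : Set E) : PointedCone ℝ E where
  carrier := {x | ∀ a ∈ s, ⟪x, a⟫ ≤ 0}
  add_mem' hx hy a ha := by rw [inner_add_left]; linarith [hx a ha, hy a ha]
  zero_mem' a _ := by rw [inner_zero_left]
  smul_mem' c x hx a ha := by
    rw [Nonneg.mk_smul .., real_inner_smul_left]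
    exact mul_nonpos_of_nonneg_of_nonpos c.2 (hx a ha)

theorem mem_polarCone {s : Set E} {x : E} : x ∈ polarCone s ↔ ∀ a ∈ s, ⟪x, a⟫ ≤ 0 := Iff.rfl

theorem polarCone_empty : polarCone (∅ : Set E) = ⊤ :=
  eq_top_iff.2 fun _ _ a ha => absurd ha (Set.notMem_empty a)

theorem polarCone_insert (a : E) (s : Set E) :
    polarCone (insert a s) = polarCone s ⊓ polarCone {a} := by
  ext x
  simp [mem_polarCone, and_comm]

theorem exists_finset_sum_eq_of_mem_hull {G : Set E} {x : E} (hx : x ∈ hull ℝ G) :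
    ∃ (T : Finset E) (c : E → ℝ), ↑T ⊆ G ∧ (∀ w, 0 ≤ c w) ∧ ∑ w ∈ T, c w • w = x := by
  obtain ⟨c, hcG, hc0, rfl⟩ := mem_hull_set.1 hx
  exact ⟨c.support, c, hcG, hc0, rfl⟩

theorem hull_union_neg_range_basis {ι : Type*} [Fintype ι] (b : Module.Basis ι ℝ E) :
    hull ℝ (Set.range b ∪ Set.range (fun i => -b i)) = ⊤ := by
  refine eq_top_iff.2 fun x _ => ?_
  rw [← b.sum_repr x]
  refine Submodule.sum_mem _ fun i _ => ?_
  rcases le_total 0 (b.repr x i) with h | h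
  · exact smul_mem _ h (subset_hull (Or.inl ⟨i, rfl⟩))
  · rw [← neg_neg (b.repr x i), neg_smul, ← smul_neg]
    exact smul_mem _ (neg_nonneg.2 h) (subset_hull (Or.inr ⟨i, rfl⟩))

def fourierMotzkin (G : Set E) (a : E) : Set E :=
  {u ∈ G | ⟪u, a⟫ ≤ 0} ∪
    Set.image2 (fun u v => ⟪u, a⟫ • v - ⟪v, a⟫ • u) {u ∈ G | 0 < ⟪u, a⟫} {v ∈ G | ⟪v, a⟫ ≤ 0}

theorem Set.Finite.fourierMotzkin {G : Set E} (hG : G.Finite) (a : E) :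
    (fourierMotzkin G a).Finite :=
  (hG.sep _).union ((hG.sep _).image2 _ (hG.sep _))

theorem sum_sum_smul_sub_smul (P N : Finset E) (c g : E → ℝ) :
    ∑ u ∈ P, ∑ v ∈ N, (c u * c v) • (g u • v - g v • u) =
      (∑ u ∈ P, c u * g u) • ∑ v ∈ N, c v • v - (∑ v ∈ N, c v * g v) • ∑ u ∈ P, c u • u := by
  simp only [smul_sub, sum_sub_distrib, smul_sum, smul_smul, sum_mul, sum_smul]
  rw [sum_comm (s := N)]
  congr 1 <;> refine sum_congr rfl fun _ _ => sum_congr rfl fun _ _ => ?_ <;> congr 1 <;> ring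

theorem fourierMotzkin_subset_hull_inf (G : Set E) (a : E) :
    fourierMotzkin G a ⊆ hull ℝ G ⊓ polarCone {a} := by
  rintro _ (⟨hu, hua⟩ | ⟨u, ⟨hu, hua⟩, v, ⟨hv, hva⟩, rfl⟩)
  · exact ⟨subset_hull hu, by simpa [mem_polarCone] using hua⟩
  · refine ⟨?_, by simp [mem_polarCone, inner_sub_left, real_inner_smul_left, mul_comm]⟩
    show ⟪u, a⟫ • v - ⟪v, a⟫ • u ∈ hull ℝ G
    rw [sub_eq_add_neg, ← neg_smul]
    exact add_mem (smul_mem _ hua.le (subset_hull hv))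
      (smul_mem _ (neg_nonneg.2 hva) (subset_hull hu))

theorem hull_inf_polarCone_le_hull_fourierMotzkin (G : Set E) (a : E) :
    hull ℝ G ⊓ polarCone {a} ≤ hull ℝ (fourierMotzkin G a) := by
  classical
  rintro x ⟨hxG, hxa⟩
  obtain ⟨T, c, hTG, hc0, rfl⟩ := exists_finset_sum_eq_of_mem_hull hxG
  set N := T.filter (⟪·, a⟫ ≤ 0)
  set P := T.filter (fun w => ¬⟪w, a⟫ ≤ 0)
  have hNG (v : E) (hv : v ∈ N) : v ∈ G ∧ ⟪v, a⟫ ≤ 0 :=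
    ⟨hTG (mem_filter.1 hv).1, (mem_filter.1 hv).2⟩
  have hPG (u : E) (hu : u ∈ P) : u ∈ G ∧ 0 < ⟪u, a⟫ :=
    ⟨hTG (mem_filter.1 hu).1, not_le.1 (mem_filter.1 hu).2⟩
  set α := ∑ u ∈ P, c u * ⟪u, a⟫
  set β := -∑ v ∈ N, c v * ⟪v, a⟫
  have hsplit : ∑ w ∈ T, c w • w = ∑ v ∈ N, c v • v + ∑ u ∈ P, c u • u :=
    (sum_filter_add_sum_filter_not ..).symm
  have hα_terms (u : E) (hu : u ∈ P) : 0 ≤ c u * ⟪u, a⟫ := mul_nonneg (hc0 u) (hPG u hu).2.le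
  have hα : 0 ≤ α := sum_nonneg hα_terms
  have hαβ : α ≤ β := by
    have h := hxa a rfl
    rw [hsplit, inner_add_left, sum_inner, sum_inner] at h
    simp only [real_inner_smul_left] at h
    linarith
  have hN : ∑ v ∈ N, c v • v ∈ hull ℝ (fourierMotzkin G a) :=
    Submodule.sum_mem _ fun v hv => smul_mem _ (hc0 v) (subset_hull (Or.inl (hNG v hv)))
  rcases (hα.trans hαβ).eq_or_lt with hβ | hβ
  · have hα0 := (sum_eq_zero_iff_of_nonneg hα_terms).1 (le_antisymm (hαβ.trans hβ.symm.le) hα)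
    have hP : ∑ u ∈ P, c u • u = 0 := sum_eq_zero fun u hu => by
      rw [(mul_eq_zero.1 (hα0 u hu)).resolve_right (hPG u hu).2.ne', zero_smul]
    rwa [hsplit, hP, add_zero]
  · rw [← smul_mem_iff _ hβ]
    have hpairs : α • ∑ v ∈ N, c v • v + β • ∑ u ∈ P, c u • u =
        ∑ u ∈ P, ∑ v ∈ N, (c u * c v) • (⟪u, a⟫ • v - ⟪v, a⟫ • u) := by
      rw [sum_sum_smul_sub_smul, sub_eq_add_neg, ← neg_smul]
    have hβx : β • ∑ w ∈ T, c w • w =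
        (β - α) • ∑ v ∈ N, c v • v + (α • ∑ v ∈ N, c v • v + β • ∑ u ∈ P, c u • u) := by
      rw [hsplit]; module
    rw [hβx, hpairs]
    exact add_mem (smul_mem _ (sub_nonneg.2 hαβ) hN) (Submodule.sum_mem _ fun u hu =>
      Submodule.sum_mem _ fun v hv => smul_mem _ (mul_nonneg (hc0 u) (hc0 v))
        (subset_hull (Or.inr ⟨u, hPG u hu, v, hNG v hv, rfl⟩)))

theorem hull_fourierMotzkin (G : Set E) (a : E) :
    hull ℝ (fourierMotzkin G a) = hull ℝ G ⊓ polarCone {a} :=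
  le_antisymm (Submodule.span_le.2 (fourierMotzkin_subset_hull_inf G a))
    (hull_inf_polarCone_le_hull_fourierMotzkin G a)

theorem exists_finite_hull_eq_polarCone [FiniteDimensional ℝ E] {s : Set E}
    (hs : s.Finite) : ∃ G : Set E, G.Finite ∧ hull ℝ G = polarCone s := by
  induction s, hs using Set.Finite.induction_on with
  | empty =>
    let b := Module.finBasis ℝ E
    exact ⟨_, (Set.finite_range b).union (Set.finite_range fun i => -b i),
      (hull_union_neg_range_basis b).trans polarCone_empty.symm⟩
  | @insert a s _ _ ih =>
    obtain ⟨G, hG, hGs⟩ := ih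
    exact ⟨fourierMotzkin G a, hG.fourierMotzkin a, by
      rw [hull_fourierMotzkin, hGs, polarCone_insert]⟩

theorem exists_norm_sub_le_of_mem_polarCone [FiniteDimensional ℝ E] {s : Set E} (hs : s.Finite)
    {a : E} (ha : a ∈ s) : ∃ C, 0 ≤ C ∧ ∀ x ∈ polarCone s,
      ∃ z ∈ polarCone s, ⟪z, a⟫ = 0 ∧ ‖x - z‖ ≤ C * -⟪x, a⟫ := by
  classical
  obtain ⟨G, hG, hGs⟩ := exists_finite_hull_eq_polarCone hs
  have hGa : ∀ w ∈ G, ⟪w, a⟫ ≤ 0 := fun w hw => (hGs ▸ subset_hull hw : w ∈ polarCone s) a ha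
  refine ⟨∑ w ∈ hG.toFinset, ‖w‖ / -⟪w, a⟫, sum_nonneg fun w hw =>
    div_nonneg (norm_nonneg w) (neg_nonneg.2 (hGa w (hG.mem_toFinset.1 hw))), fun x hx => ?_⟩
  have hxa0 : 0 ≤ -⟪x, a⟫ := neg_nonneg.2 (hx a ha)
  rw [← hGs] at hx ⊢
  obtain ⟨T, c, hTG, hc0, hxT⟩ := exists_finset_sum_eq_of_mem_hull hx
  have hxa : -⟪x, a⟫ = ∑ w ∈ T, c w * -⟪w, a⟫ := by
    simp only [← hxT, sum_inner, real_inner_smul_left, ← sum_neg_distrib, mul_neg]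
  have hcoef (w : E) (hw : w ∈ T) : c w * -⟪w, a⟫ ≤ -⟪x, a⟫ :=
    hxa ▸ single_le_sum (fun v hv => mul_nonneg (hc0 v) (neg_nonneg.2 (hGa v (hTG hv)))) hw
  refine ⟨∑ w ∈ T with ⟪w, a⟫ = 0, c w • w, Submodule.sum_mem _ fun w hw =>
    smul_mem _ (hc0 w) (subset_hull (hTG (mem_filter.1 hw).1)), ?_, ?_⟩
  · rw [sum_inner]
    exact sum_eq_zero fun w hw => by rw [real_inner_smul_left, (mem_filter.1 hw).2, mul_zero]
  have hxz : x - ∑ w ∈ T with ⟪w, a⟫ = 0, c w • w = ∑ w ∈ T with ¬⟪w, a⟫ = 0, c w • w := by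
    rw [← hxT, ← sum_filter_add_sum_filter_not T (⟪·, a⟫ = 0), add_sub_cancel_left]
  rw [hxz, sum_mul]
  calc ‖∑ w ∈ T with ¬⟪w, a⟫ = 0, c w • w‖
      ≤ ∑ w ∈ T with ¬⟪w, a⟫ = 0, ‖w‖ / -⟪w, a⟫ * -⟪x, a⟫ := by
        refine (norm_sum_le _ _).trans (sum_le_sum fun w hw => ?_)
        obtain ⟨hwT, hwa⟩ := mem_filter.1 hw
        have hneg : 0 < -⟪w, a⟫ := neg_pos.2 ((hGa w (hTG hwT)).lt_of_ne hwa)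
        rw [norm_smul, Real.norm_of_nonneg (hc0 w), div_mul_eq_mul_div, le_div_iff₀ hneg,
          mul_comm (c w), mul_assoc]
        exact mul_le_mul_of_nonneg_left (hcoef w hwT) (norm_nonneg w)
    _ ≤ ∑ w ∈ hG.toFinset, ‖w‖ / -⟪w, a⟫ * -⟪x, a⟫ := by
        refine sum_le_sum_of_subset_of_nonneg
          (filter_subset _ _ |>.trans fun w hw => hG.mem_toFinset.2 (hTG hw)) fun w hw _ => ?_
        have hwa := neg_nonneg.2 (hGa w (hG.mem_toFinset.1 hw))
        positivity

theorem exists_forall_exists_face_norm_sub_le [FiniteDimensional ℝ E] {ι : Type*} [Fintype ι]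
    (ν : ι → E) : ∃ C, 0 ≤ C ∧ ∀ x, (∀ m, ⟪x, ν m⟫ ≤ 0) → ∀ j, ∃ z, (∀ m, ⟪z, ν m⟫ ≤ 0) ∧
      (∀ k, ⟪x, ν k⟫ = 0 → ⟪z, ν k⟫ = 0) ∧ ⟪z, ν j⟫ = 0 ∧ ‖x - z‖ ≤ C * -⟪x, ν j⟫ := by
  classical
  -- `S` will be the active set of `x`; the equalities `⟪·, ν k⟫ = 0`, `k ∈ S`, enter as `-ν k`.
  choose C hC0 hC using fun (S : Finset ι) (j : ι) =>
    exists_norm_sub_le_of_mem_polarCone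
      ((Set.finite_range ν).union (S.finite_toSet.image fun k => -ν k)) (Or.inl ⟨j, rfl⟩)
  refine ⟨∑ p : Finset ι × ι, C p.1 p.2, sum_nonneg fun p _ => hC0 p.1 p.2, fun x hx j => ?_⟩
  set S := univ.filter fun k => ⟪x, ν k⟫ = 0
  have hxS : x ∈ polarCone (Set.range ν ∪ (fun k => -ν k) '' ↑S) := by
    rintro _ (⟨m, rfl⟩ | ⟨k, hk, rfl⟩)
    · exact hx m
    · rw [inner_neg_right, (mem_filter.1 hk).2, neg_zero]
  obtain ⟨z, hz, hzj, hxz⟩ := hC S j x hxS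
  have hzν (m : ι) : ⟪z, ν m⟫ ≤ 0 := hz _ (Or.inl ⟨m, rfl⟩)
  refine ⟨z, hzν, fun k hk => le_antisymm (hzν k) ?_, hzj, hxz.trans ?_⟩
  · have h := hz _ (Or.inr ⟨k, by simpa [S] using hk, rfl⟩)
    rwa [inner_neg_right, neg_nonpos] at h
  · exact mul_le_mul_of_nonneg_right
      (single_le_sum (f := fun p : Finset ι × ι => C p.1 p.2) (fun p _ => hC0 p.1 p.2)
        (mem_univ (S, j))) (neg_nonneg.2 (hx j))

theorem inner_nonpos_of_dist_lt {x y ν : E} (hν : ‖ν‖ = 1) (h : dist y x < -⟪x, ν⟫) :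
    ⟪y, ν⟫ ≤ 0 := by
  have := real_inner_le_norm (y - x) ν
  rw [hν, mul_one, ← dist_eq_norm, inner_sub_left] at this
  linarith

end PolarCone

section Strata

variable {n N : ℕ} {ν : Fin N → EuclideanSpace ℝ (Fin (n + 1))}

theorem mem_stratumLE_sub_one {i : ℤ} {x z : EuclideanSpace ℝ (Fin (n + 1))} {j : Fin N}
    (hx : x ∈ stratumLE n N ν i) (hxj : ⟪x, ν j⟫ ≠ 0) (hz : ∀ m, ⟪z, ν m⟫ ≤ 0)
    (hxz : ∀ k, ⟪x, ν k⟫ = 0 → ⟪z, ν k⟫ = 0) (hzj : ⟪z, ν j⟫ = 0) :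
    z ∈ stratumLE n N ν (i - 1) := by
  refine ⟨hz, ?_⟩
  set W := ⨅ k ∈ {k | ⟪x, ν k⟫ = 0}, (Submodule.span ℝ {ν k})ᗮ
  have hzW : ⨅ k ∈ {k | ⟪z, ν k⟫ = 0}, (Submodule.span ℝ {ν k})ᗮ ≤
      W ⊓ (Submodule.span ℝ {ν j})ᗮ :=
    le_inf (biInf_mono hxz) (iInf₂_le j hzj)
  have hxW : x ∈ W := by
    simp [W, Submodule.mem_iInf, Submodule.mem_orthogonal_singleton_iff_inner_right,
      real_inner_comm]
  have hlt : W ⊓ (Submodule.span ℝ {ν j})ᗮ < W := inf_lt_left.2 fun hW => hxj <| by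
    simpa [Submodule.mem_orthogonal_singleton_iff_inner_right, real_inner_comm] using hW hxW
  have := Submodule.finrank_lt_finrank_of_lt hlt
  have := Submodule.finrank_mono hzW
  have hxi : (Module.finrank ℝ W : ℤ) ≤ i := hx.2
  omega

theorem exists_infEDist_stratumLE_sub_one_le (n N : ℕ)
    (ν : Fin N → EuclideanSpace ℝ (Fin (n + 1))) :
    ∃ C, 0 ≤ C ∧ ∀ (i : ℤ), ∀ x ∈ stratumLE n N ν i, ∀ j, ⟪x, ν j⟫ ≠ 0 →
      Metric.infEDist x (stratumLE n N ν (i - 1)) ≤ ENNReal.ofReal (C * -⟪x, ν j⟫) := by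
  obtain ⟨C, hC0, hC⟩ := exists_forall_exists_face_norm_sub_le ν
  refine ⟨C, hC0, fun i x hx j hj => ?_⟩
  obtain ⟨z, hz, hxz, hzj, hd⟩ := hC x hx.1 j
  refine (Metric.infEDist_le_edist_of_mem (mem_stratumLE_sub_one hx hj hz hxz hzj)).trans ?_
  rw [edist_dist, dist_eq_norm]
  exact ENNReal.ofReal_le_ofReal hd

end Strata

theorem stmt_2_general (n N : ℕ) (ν : Fin N → EuclideanSpace ℝ (Fin (n + 1)))
    (hν : ∀ j, ‖ν j‖ = 1)
    (Ω : Set (EuclideanSpace ℝ (Fin (n + 1))))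
    (hΩ : Ω = ⋂ j, {x : EuclideanSpace ℝ (Fin (n + 1)) | ⟪x, ν j⟫ ≤ 0}) :
    ∃ B : ℝ, 0 < B ∧ B < 1 / 4 ∧
      ∀ i : ℕ, i ≤ n + 1 →
        ∀ x ∈ stratumLE n N ν (i : ℤ), ∀ y : EuclideanSpace ℝ (Fin (n + 1)),
          edist y x < ENNReal.ofReal (2 * B) *
              EMetric.infEdist x (stratumLE n N ν ((i : ℤ) - 1)) →
          (y ∈ Ω ↔ ∀ j, ⟪x, ν j⟫ = 0 → ⟪y - x, ν j⟫ ≤ 0) := by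
  obtain ⟨C, hC0, hC⟩ := exists_infEDist_stratumLE_sub_one_le n N ν
  refine ⟨1 / (8 * (C + 1)), by positivity, ?_, fun i _ x hx y hy => ?_⟩
  · rw [div_lt_div_iff₀ (by positivity) (by norm_num)]
    linarith
  subst hΩ
  simp only [Set.mem_iInter, Set.mem_ofPred_eq, inner_sub_left, sub_nonpos]
  refine ⟨fun hy j hj => hj ▸ hy j, fun hT j => ?_⟩
  by_cases hj : ⟪x, ν j⟫ = 0
  · exact hj ▸ hT j hj
  refine inner_nonpos_of_dist_lt (x := x) (hν j) ?_
  have h := hy.trans_le (mul_le_mul_right (hC i x hx j hj) _)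
  rw [← ENNReal.ofReal_mul (by positivity), edist_lt_ofReal] at h
  have hBC : 2 * (1 / (8 * (C + 1))) * C ≤ 1 := by
    rw [mul_one_div, div_mul_eq_mul_div, div_le_one (by positivity)]
    linarith
  calc dist y x < 2 * (1 / (8 * (C + 1))) * (C * -⟪x, ν j⟫) := h
    _ = 2 * (1 / (8 * (C + 1))) * C * -⟪x, ν j⟫ := by ring
    _ ≤ -⟪x, ν j⟫ := mul_le_of_le_one_left (neg_nonneg.2 (hx.1 j)) hBC

/-- There is a constant `B ∈ (0, 1/4)` such that for every `i`, every
`x ∈ ∂_iΩ`, and every `y` with `|y − x| < 2B·dist(x, ∂_{i−1}Ω)` (distance to `∅` being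
`+∞`), one has `y ∈ Ω ↔ y − x ∈ T_xΩ`. -/
theorem stmt_2 (n N : ℕ) (ν : Fin N → EuclideanSpace ℝ (Fin (n + 1)))
    (hν : ∀ j, ‖ν j‖ = 1)
    (Ω : Set (EuclideanSpace ℝ (Fin (n + 1))))
    (hΩ : Ω = ⋂ j, {x : EuclideanSpace ℝ (Fin (n + 1)) | ⟪x, ν j⟫ ≤ 0})
    (hint : (interior Ω).Nonempty) :
    ∃ B : ℝ, 0 < B ∧ B < 1 / 4 ∧
      ∀ i : ℕ, i ≤ n + 1 →
        ∀ x ∈ stratumLE n N ν (i : ℤ), ∀ y : EuclideanSpace ℝ (Fin (n + 1)),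
          edist y x < ENNReal.ofReal (2 * B) *
              EMetric.infEdist x (stratumLE n N ν ((i : ℤ) - 1)) →
          (y ∈ Ω ↔ ∀ j, ⟪x, ν j⟫ = 0 → ⟪y - x, ν j⟫ ≤ 0) :=
  stmt_2_general n N ν hν Ω hΩ
end

section
/- For every d ≥ 1 there exist constants ε ∈ (0,1] and c ≥ 1, depending only on d, with the following property: for every linear subspace U ⊆ ℝ^d and all linear maps A, B : ℝ^d → ℝ^d with ‖A − Id‖ < ε and ‖B − Id‖ < ε (operator norm), the orthogonal projections onto the image subspaces A(U) and B(U) satisfy ‖π_{A(U)} − π_{B(U)}‖ ≤ c · ‖A − B‖. -/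
/-!
Write `P_V` for the orthogonal projection onto `V`. Algebraically
`P_V - P_W = P_V P_{W⊥} - P_{V⊥} P_W`, and `P_V P_{W⊥}` is the adjoint of `P_{W⊥} P_V`, so
`‖P_V - P_W‖` is at most twice the largest relative distance from a unit vector of one subspace
to the other. A vector `A y` of `A(U)` is within `‖A y - B y‖ ≤ ‖A - B‖ ‖y‖` of `B(U)`, and
`‖y‖ ≤ 2 ‖A y‖` as soon as `‖A - 1‖ ≤ 1/2`; so `ε = 1/2` and `c = 4` work in every dimension.
-/

/-- The orthogonal projection onto a subspace, as an endomorphism of the ambient space. -/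
noncomputable def projL (d : ℕ) (W : Submodule ℝ (EuclideanSpace ℝ (Fin d))) :
    EuclideanSpace ℝ (Fin d) →L[ℝ] EuclideanSpace ℝ (Fin d) :=
  W.subtypeL.comp (W.orthogonalProjection)

open ContinuousLinearMap

namespace Submodule

variable {𝕜 E : Type*} [RCLike 𝕜] [NormedAddCommGroup E] [InnerProductSpace 𝕜 E]

lemma norm_starProjection_orthogonal_le (K : Submodule 𝕜 E) [K.HasOrthogonalProjection]
    (x : E) {w : E} (hw : w ∈ K) : ‖Kᗮ.starProjection x‖ ≤ ‖x - w‖ := by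
  have hKw : Kᗮ.starProjection w = 0 := starProjection_orthogonal_apply_eq_zero hw
  calc ‖Kᗮ.starProjection x‖ = ‖Kᗮ.starProjection (x - w)‖ := by rw [map_sub, hKw, sub_zero]
    _ ≤ ‖x - w‖ := norm_starProjection_apply_le _ _

variable (V W : Submodule 𝕜 E) [V.HasOrthogonalProjection] [W.HasOrthogonalProjection]

lemma norm_starProjection_orthogonal_mul_starProjection_le {δ : ℝ} (hδ : 0 ≤ δ)
    (hV : ∀ v ∈ V, ‖Wᗮ.starProjection v‖ ≤ δ * ‖v‖) :
    ‖Wᗮ.starProjection * V.starProjection‖ ≤ δ :=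
  opNorm_le_bound _ hδ fun x ↦
    calc ‖Wᗮ.starProjection (V.starProjection x)‖ ≤ δ * ‖V.starProjection x‖ :=
          hV _ (V.starProjection_apply_mem x)
      _ ≤ δ * ‖x‖ := by gcongr; exact norm_starProjection_apply_le _ _

lemma starProjection_sub_starProjection :
    V.starProjection - W.starProjection =
      V.starProjection * Wᗮ.starProjection - Vᗮ.starProjection * W.starProjection := by
  rw [starProjection_orthogonal', starProjection_orthogonal']
  noncomm_ring

lemma norm_starProjection_mul_starProjection_orthogonal [CompleteSpace E] :
    ‖V.starProjection * Wᗮ.starProjection‖ = ‖Wᗮ.starProjection * V.starProjection‖ := by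
  rw [← norm_star (Wᗮ.starProjection * V.starProjection), star_mul,
    (isSelfAdjoint_starProjection V).star_eq, (isSelfAdjoint_starProjection Wᗮ).star_eq]

theorem norm_starProjection_sub_starProjection_le [CompleteSpace E] {δ : ℝ} (hδ : 0 ≤ δ)
    (hV : ∀ v ∈ V, ‖Wᗮ.starProjection v‖ ≤ δ * ‖v‖)
    (hW : ∀ w ∈ W, ‖Vᗮ.starProjection w‖ ≤ δ * ‖w‖) :
    ‖V.starProjection - W.starProjection‖ ≤ 2 * δ := by
  rw [starProjection_sub_starProjection, two_mul]
  refine (norm_sub_le _ _).trans (add_le_add ?_ ?_)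
  · rw [norm_starProjection_mul_starProjection_orthogonal]
    exact norm_starProjection_orthogonal_mul_starProjection_le V W hδ hV
  · exact norm_starProjection_orthogonal_mul_starProjection_le W V hδ hW

end Submodule

section PerturbedImage

variable {𝕜 E F : Type*} [RCLike 𝕜] [NormedAddCommGroup E] [NormedSpace 𝕜 E]
  [NormedAddCommGroup F] [InnerProductSpace 𝕜 F]

lemma ContinuousLinearMap.norm_le_mul_norm_apply_of_norm_sub_one_le {A : E →L[𝕜] E} {r : ℝ}
    (hA : ‖A - 1‖ ≤ r) (hr : r < 1) (x : E) : ‖x‖ ≤ (1 - r)⁻¹ * ‖A x‖ := by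
  rw [le_inv_mul_iff₀ (sub_pos.mpr hr)]
  have hAx : ‖A x - x‖ ≤ r * ‖x‖ := by
    simpa using (le_opNorm (A - 1) x).trans (mul_le_mul_of_nonneg_right hA (norm_nonneg x))
  linarith [norm_sub_norm_le x (A x), norm_sub_rev x (A x)]

lemma norm_starProjection_orthogonal_map_le (U : Submodule 𝕜 E) (A B : E →L[𝕜] F)
    [(U.map (B : E →ₗ[𝕜] F)).HasOrthogonalProjection] {K : ℝ}
    (hA : ∀ y, ‖y‖ ≤ K * ‖A y‖) {v : F} (hv : v ∈ U.map (A : E →ₗ[𝕜] F)) :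
    ‖(U.map (B : E →ₗ[𝕜] F))ᗮ.starProjection v‖ ≤ K * ‖A - B‖ * ‖v‖ := by
  obtain ⟨y, hy, rfl⟩ := hv
  calc ‖(U.map (B : E →ₗ[𝕜] F))ᗮ.starProjection (A y)‖ ≤ ‖A y - B y‖ :=
        Submodule.norm_starProjection_orthogonal_le _ _ (Submodule.mem_map_of_mem hy)
    _ ≤ ‖A - B‖ * ‖y‖ := le_opNorm (A - B) y
    _ ≤ ‖A - B‖ * (K * ‖A y‖) := by gcongr; exact hA y
    _ = K * ‖A - B‖ * ‖A y‖ := by ring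

end PerturbedImage

theorem stmt_8_general (d : ℕ) :
    ∃ ε c : ℝ, 0 < ε ∧ ε ≤ 1 ∧ 1 ≤ c ∧
      ∀ (U : Submodule ℝ (EuclideanSpace ℝ (Fin d)))
        (A B : EuclideanSpace ℝ (Fin d) →L[ℝ] EuclideanSpace ℝ (Fin d)),
        ‖A - ContinuousLinearMap.id ℝ (EuclideanSpace ℝ (Fin d))‖ < ε →
        ‖B - ContinuousLinearMap.id ℝ (EuclideanSpace ℝ (Fin d))‖ < ε →
        ‖projL d (U.map (A : EuclideanSpace ℝ (Fin d) →ₗ[ℝ] EuclideanSpace ℝ (Fin d))) -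
            projL d (U.map (B : EuclideanSpace ℝ (Fin d) →ₗ[ℝ] EuclideanSpace ℝ (Fin d)))‖ ≤
          c * ‖A - B‖ := by
  refine ⟨1 / 2, 4, by norm_num, by norm_num, by norm_num, fun U A B hA hB ↦ ?_⟩
  have hAinv := norm_le_mul_norm_apply_of_norm_sub_one_le hA.le (by norm_num)
  have hBinv := norm_le_mul_norm_apply_of_norm_sub_one_le hB.le (by norm_num)
  norm_num at hAinv hBinv
  have h := Submodule.norm_starProjection_sub_starProjection_le _ _ (by positivity)
    (fun v hv ↦ norm_starProjection_orthogonal_map_le U A B hAinv hv)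
    (fun w hw ↦ norm_sub_rev B A ▸ norm_starProjection_orthogonal_map_le U B A hBinv hw)
  exact h.trans_eq (by ring)

/-- For linear maps `A, B` near the identity, the orthogonal projections
onto `A(U)` and `B(U)` differ by at most `c · ‖A − B‖`. -/
theorem stmt_8 (d : ℕ) (hd : 1 ≤ d) :
    ∃ ε c : ℝ, 0 < ε ∧ ε ≤ 1 ∧ 1 ≤ c ∧
      ∀ (U : Submodule ℝ (EuclideanSpace ℝ (Fin d)))
        (A B : EuclideanSpace ℝ (Fin d) →L[ℝ] EuclideanSpace ℝ (Fin d)),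
        ‖A - ContinuousLinearMap.id ℝ (EuclideanSpace ℝ (Fin d))‖ < ε →
        ‖B - ContinuousLinearMap.id ℝ (EuclideanSpace ℝ (Fin d))‖ < ε →
        ‖projL d (U.map (A : EuclideanSpace ℝ (Fin d) →ₗ[ℝ] EuclideanSpace ℝ (Fin d))) -
            projL d (U.map (B : EuclideanSpace ℝ (Fin d) →ₗ[ℝ] EuclideanSpace ℝ (Fin d)))‖ ≤
          c * ‖A - B‖ :=
  stmt_8_general d
end

section
/- Let Ω⁰ be a polyhedral cone domain in ℝ^{n+1}. There exist constants ε_B ∈ (0,1) and c_B ≥ 1, depending only on n, such that the following holds for every ε ≤ ε_B. Let Ψ : ℝ^{n+1} → ℝ^{n+1} be linear with ‖Ψ − Id‖ ≤ ε, and let Φ : B_2 → ℝ^{n+1} be a C² diffeomorphism onto its image with Φ(0) = 0, DΦ|_0 = Id and sup_{y ∈ B_2}(|Φ(y) − y| + ‖DΦ|_y − Id‖ + ‖D²Φ|_y‖) ≤ ε. Fix i ∈ {0, …, n+1} and suppose S := ∂_{i−1}Ω⁰ ∩ B_{3/2} is nonempty. Then for every z ∈ ∂_iΩ⁰ ∩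 B_1, setting x := Φ(Ψ(z)), one has (1 − c_B ε)·dist(x, Φ(Ψ(S))) ≤ dist(z, S) ≤ (1 + c_B ε)·dist(x, Φ(Ψ(S))). -/
/-! Both `Ψ - id` and `Φ - id` are `ε`-Lipschitz (the latter on `B_2`, by the mean value
theorem, since `‖DΦ - Id‖ ≤ ε`), and `Ψ` maps `B_{3/2}` into `B_2`. Hence `Φ ∘ Ψ` distorts
distances between points of `B_{3/2}`, such as `z` and the points of `S`, by factors between
`(1 - ε)²` and `(1 + ε)²`, and therefore distorts `dist(z, S)` by the same factors. For
`ε ≤ 1/8` one has `(1 - 3ε)(1 + ε)² ≤ 1 ≤ (1 + 3ε)(1 - ε)²`, which gives `c_B = 3`. -/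

open scoped RealInnerProductSpace ENNReal
open Metric

open scoped NNReal
open Set

section NearIdentity

variable {E : Type*} [SeminormedAddCommGroup E] {f : E → E} {s : Set E} {K : ℝ≥0}

lemma LipschitzOnWith.dist_le_one_add_mul_of_sub_id (hf : LipschitzOnWith K (f - id) s)
    {a b : E} (ha : a ∈ s) (hb : b ∈ s) : dist (f a) (f b) ≤ (1 + K) * dist a b := by
  have h := hf.dist_le_mul a ha b hb
  simp only [dist_eq_norm, Pi.sub_apply, id] at h ⊢
  calc ‖f a - f b‖ = ‖(a - b) + (f a - a - (f b - b))‖ := by congr 1; abel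
    _ ≤ ‖a - b‖ + ‖f a - a - (f b - b)‖ := norm_add_le _ _
    _ ≤ (1 + K) * ‖a - b‖ := by linarith

lemma LipschitzOnWith.one_sub_mul_dist_le_of_sub_id (hf : LipschitzOnWith K (f - id) s)
    {a b : E} (ha : a ∈ s) (hb : b ∈ s) : (1 - K) * dist a b ≤ dist (f a) (f b) := by
  have h := hf.dist_le_mul a ha b hb
  simp only [dist_eq_norm, Pi.sub_apply, id] at h ⊢
  have : ‖a - b‖ ≤ ‖f a - f b‖ + ‖f a - a - (f b - b)‖ := by
    calc ‖a - b‖ = ‖(f a - f b) - (f a - a - (f b - b))‖ := by congr 1; abel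
      _ ≤ _ := _root_.norm_sub_le _ _
  linarith

lemma dist_comp_mem_Icc_of_lipschitzOnWith_sub_id {Φ Ψ : E → E} {t : Set E} (hK : K ≤ 1)
    (hΦ : LipschitzOnWith K (Φ - id) t) (hΨ : LipschitzOnWith K (Ψ - id) s)
    (hΨst : MapsTo Ψ s t) {a b : E} (ha : a ∈ s) (hb : b ∈ s) :
    dist (Φ (Ψ a)) (Φ (Ψ b)) ∈ Icc ((1 - K) ^ 2 * dist a b) ((1 + K) ^ 2 * dist a b) := by
  have hK' : (0 : ℝ) ≤ 1 - K := by rw [sub_nonneg]; exact_mod_cast hK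
  constructor
  · calc (1 - K) ^ 2 * dist a b = (1 - K) * ((1 - K) * dist a b) := by ring
      _ ≤ (1 - K) * dist (Ψ a) (Ψ b) :=
        mul_le_mul_of_nonneg_left (hΨ.one_sub_mul_dist_le_of_sub_id ha hb) hK'
      _ ≤ _ := hΦ.one_sub_mul_dist_le_of_sub_id (hΨst ha) (hΨst hb)
  · calc dist (Φ (Ψ a)) (Φ (Ψ b)) ≤ (1 + K) * dist (Ψ a) (Ψ b) :=
        hΦ.dist_le_one_add_mul_of_sub_id (hΨst ha) (hΨst hb)
      _ ≤ (1 + K) * ((1 + K) * dist a b) :=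
        mul_le_mul_of_nonneg_left (hΨ.dist_le_one_add_mul_of_sub_id ha hb) (by positivity)
      _ = _ := by ring

end NearIdentity

lemma ContinuousLinearMap.lipschitzWith_sub_id {𝕜 E : Type*} [NontriviallyNormedField 𝕜]
    [SeminormedAddCommGroup E] [NormedSpace 𝕜 E] (Ψ : E →L[𝕜] E) :
    LipschitzWith ‖Ψ - ContinuousLinearMap.id 𝕜 E‖₊ (⇑Ψ - id) := by
  simpa using (Ψ - ContinuousLinearMap.id 𝕜 E).lipschitz

lemma Convex.lipschitzOnWith_sub_id_of_norm_fderiv_sub_id_le {E : Type*} [NormedAddCommGroup E]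
    [NormedSpace ℝ E] {f : E → E} {s : Set E} {K : ℝ≥0} (hs : Convex ℝ s)
    (hf : ∀ x ∈ s, DifferentiableAt ℝ f x)
    (bound : ∀ x ∈ s, ‖fderiv ℝ f x - ContinuousLinearMap.id ℝ E‖ ≤ K) :
    LipschitzOnWith K (f - id) s := by
  refine hs.lipschitzOnWith_of_nnnorm_fderiv_le (fun x hx => (hf x hx).sub differentiableAt_id)
    fun x hx => ?_
  rw [fderiv_sub (hf x hx) differentiableAt_id, fderiv_id, ← NNReal.coe_le_coe, coe_nnnorm]
  exact bound x hx

namespace Metric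

variable {X Y : Type*} [PseudoMetricSpace X] [PseudoMetricSpace Y] {f : X → Y} {s : Set X}
  {x : X} {c : ℝ}

lemma infDist_image_le_mul (hc : 0 ≤ c) (hf : ∀ y ∈ s, dist (f x) (f y) ≤ c * dist x y) :
    infDist (f x) (f '' s) ≤ c * infDist x s := by
  rcases s.eq_empty_or_nonempty with rfl | hs
  · simp
  have hfs (y) (hy : y ∈ s) : infDist (f x) (f '' s) ≤ c * dist x y :=
    (infDist_le_dist_of_mem (mem_image_of_mem f hy)).trans (hf y hy)
  rcases hc.eq_or_lt with rfl | hc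
  · simpa using hfs _ hs.some_mem
  rw [← div_le_iff₀' hc, le_infDist hs]
  exact fun y hy => (div_le_iff₀' hc).2 (hfs y hy)

lemma mul_infDist_le_infDist_image (hc : 0 ≤ c)
    (hf : ∀ y ∈ s, c * dist x y ≤ dist (f x) (f y)) :
    c * infDist x s ≤ infDist (f x) (f '' s) := by
  rcases s.eq_empty_or_nonempty with rfl | hs
  · simp
  rw [le_infDist (hs.image f)]
  rintro _ ⟨y, hy, rfl⟩
  exact (mul_le_mul_of_nonneg_left (infDist_le_dist_of_mem hy) hc).trans (hf y hy)

end Metric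

/-- Comparability of the distance of `z ∈ ∂_iΩ⁰` to
`S = ∂_{i−1}Ω⁰ ∩ B_{3/2}` with the distance of `x = Φ(Ψ(z))` to `Φ(Ψ(S))`, for
perturbations `Φ, Ψ` of the identity. -/
theorem stmt_10 (n : ℕ) :
    ∃ εB cB : ℝ, 0 < εB ∧ εB < 1 ∧ 1 ≤ cB ∧
      ∀ (N : ℕ) (ν : Fin N → EuclideanSpace ℝ (Fin (n + 1))), (∀ j, ‖ν j‖ = 1) →
      ∀ Ω0 : Set (EuclideanSpace ℝ (Fin (n + 1))),
        Ω0 = ⋂ j, {x : EuclideanSpace ℝ (Fin (n + 1)) | ⟪x, ν j⟫ ≤ 0} →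
        (interior Ω0).Nonempty →
      ∀ ε : ℝ, 0 ≤ ε → ε ≤ εB →
      ∀ Ψ : EuclideanSpace ℝ (Fin (n + 1)) →L[ℝ] EuclideanSpace ℝ (Fin (n + 1)),
        ‖Ψ - ContinuousLinearMap.id ℝ (EuclideanSpace ℝ (Fin (n + 1)))‖ ≤ ε →
      ∀ Φ : EuclideanSpace ℝ (Fin (n + 1)) → EuclideanSpace ℝ (Fin (n + 1)),
        ContDiffOn ℝ 2 Φ (ball 0 2) →
        Set.InjOn Φ (ball 0 2) →
        Φ 0 = 0 →
        fderiv ℝ Φ 0 = ContinuousLinearMap.id ℝ (EuclideanSpace ℝ (Fin (n + 1))) →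
        (∀ y ∈ ball (0 : EuclideanSpace ℝ (Fin (n + 1))) 2,
          ‖Φ y - y‖ +
            ‖fderiv ℝ Φ y - ContinuousLinearMap.id ℝ (EuclideanSpace ℝ (Fin (n + 1)))‖ +
            ‖fderiv ℝ (fderiv ℝ Φ) y‖ ≤ ε) →
      ∀ i : ℕ, i ≤ n + 1 →
        (stratumLE n N ν ((i : ℤ) - 1) ∩ ball 0 (3 / 2)).Nonempty →
      ∀ z ∈ stratumLE n N ν (i : ℤ) ∩ ball 0 1,
        (1 - cB * ε) *
            Metric.infDist (Φ (Ψ z))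
              ((Φ ∘ ⇑Ψ) '' (stratumLE n N ν ((i : ℤ) - 1) ∩ ball 0 (3 / 2))) ≤
          Metric.infDist z (stratumLE n N ν ((i : ℤ) - 1) ∩ ball 0 (3 / 2)) ∧
        Metric.infDist z (stratumLE n N ν ((i : ℤ) - 1) ∩ ball 0 (3 / 2)) ≤
          (1 + cB * ε) *
            Metric.infDist (Φ (Ψ z))
              ((Φ ∘ ⇑Ψ) '' (stratumLE n N ν ((i : ℤ) - 1) ∩ ball 0 (3 / 2))) := by
  refine ⟨1 / 8, 3, by norm_num, by norm_num, by norm_num, ?_⟩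
  intro N ν _ Ω0 _ _ ε hε0 hεB Ψ hΨ Φ hΦC2 _ _ _ hΦbound i _ _ z ⟨_, hz⟩
  set S := stratumLE n N ν ((i : ℤ) - 1) ∩ ball 0 (3 / 2)
  set K : ℝ≥0 := ⟨ε, hε0⟩
  have hKε : (K : ℝ) = ε := rfl
  have hK : K ≤ 1 := by rw [← NNReal.coe_le_coe, NNReal.coe_one, hKε]; linarith
  have hΨK : LipschitzOnWith K (⇑Ψ - id) (ball 0 (3 / 2)) := by
    refine (Ψ.lipschitzWith_sub_id.weaken ?_).lipschitzOnWith
    rwa [← NNReal.coe_le_coe, coe_nnnorm]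
  have hΦK : LipschitzOnWith K (Φ - id) (ball 0 2) := by
    refine (convex_ball 0 2).lipschitzOnWith_sub_id_of_norm_fderiv_sub_id_le
      (fun y hy => (hΦC2.differentiableOn (by norm_num)).differentiableAt
        (isOpen_ball.mem_nhds hy)) fun y hy => ?_
    rw [hKε]
    linarith [hΦbound y hy, norm_nonneg (Φ y - y), norm_nonneg (fderiv ℝ (fderiv ℝ Φ) y)]
  have hΨmaps : MapsTo Ψ (ball 0 (3 / 2)) (ball 0 2) := fun u hu => by
    have h := hΨK.dist_le_one_add_mul_of_sub_id hu (mem_ball_self (by norm_num))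
    rw [map_zero, hKε] at h
    rw [mem_ball] at hu ⊢
    nlinarith [dist_nonneg (x := u) (y := 0)]
  have hdist (s) (hs : s ∈ S) := dist_comp_mem_Icc_of_lipschitzOnWith_sub_id hK hΦK hΨK hΨmaps
    (ball_subset_ball (by norm_num) hz) hs.2
  have hupper := infDist_image_le_mul (f := Φ ∘ Ψ) (sq_nonneg _) fun s hs => (hdist s hs).2
  have hlower :=
    mul_infDist_le_infDist_image (f := Φ ∘ Ψ) (sq_nonneg _) fun s hs => (hdist s hs).1
  rw [hKε, Function.comp_apply] at hupper hlower
  have hd := infDist_nonneg (x := z) (s := S)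
  constructor <;> nlinarith [mul_nonneg hε0 hd, mul_nonneg (mul_nonneg hε0 hε0) hd]
end

section
/- Let ν_1, …, ν_n be a basis of ℝ^n satisfying ⟨ν_i, ν_j⟩ ≤ 0 for all i ≠ j. Let v ∈ ℝ^n satisfy ⟨v, ν_k⟩ ≤ 0 for every k = 1, …, n, and write v = Σ_{j=1}^n λ_j ν_j. Then λ_j ≤ 0 for every j. -/
open scoped RealInnerProductSpace

/-- If `ν_1, …, ν_n` is a basis of `ℝ^n` with pairwise non-positive
inner products, and `v = Σ λ_j ν_j` satisfies `⟪v, ν_k⟫ ≤ 0` for all `k`, then all the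
coefficients `λ_j` are non-positive. -/
theorem stmt_13 (n : ℕ) (ν : Fin n → EuclideanSpace ℝ (Fin n))
    (hindep : LinearIndependent ℝ ν)
    (hspan : Submodule.span ℝ (Set.range ν) = ⊤)
    (hobtuse : ∀ i j, i ≠ j → ⟪ν i, ν j⟫ ≤ 0)
    (v : EuclideanSpace ℝ (Fin n)) (hv : ∀ k, ⟪v, ν k⟫ ≤ 0)
    (l : Fin n → ℝ) (hl : v = ∑ j, l j • ν j) :
    ∀ j, l j ≤ 0 := by
  by_contra h
  push_neg at h
  obtain ⟨j0, hj0⟩ := h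
  set f : Fin n → ℝ := fun j => if 0 < l j then l j else 0 with hf
  set g : Fin n → ℝ := fun j => if 0 < l j then 0 else -(l j) with hg
  have hf0 : ∀ j, 0 ≤ f j := by
    intro j; by_cases hj : 0 < l j <;> simp [hf, hj] <;> linarith
  have hg0 : ∀ j, 0 ≤ g j := by
    intro j; by_cases hj : 0 < l j <;> simp [hg, hj] <;> linarith
  set w : EuclideanSpace ℝ (Fin n) := ∑ j, f j • ν j with hw
  set u : EuclideanSpace ℝ (Fin n) := ∑ j, g j • ν j with hu
  have hvw : w = v + u := by
    rw [hl, hw, hu, ← Finset.sum_add_distrib]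
    refine Finset.sum_congr rfl fun j _ => ?_
    rw [← add_smul]
    congr 1
    by_cases hj : 0 < l j <;> simp [hf, hg, hj]
  have hvwle : ⟪v, w⟫ ≤ 0 := by
    rw [hw, inner_sum]
    refine Finset.sum_nonpos fun j _ => ?_
    rw [real_inner_smul_right]
    exact mul_nonpos_of_nonneg_of_nonpos (hf0 j) (hv j)
  have huwle : ⟪u, w⟫ ≤ 0 := by
    rw [hw, hu, sum_inner]
    refine Finset.sum_nonpos fun i _ => ?_
    rw [inner_sum]
    refine Finset.sum_nonpos fun j _ => ?_
    rw [real_inner_smul_left, real_inner_smul_right]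
    by_cases hij : i = j
    · subst hij
      by_cases hi : 0 < l i <;> simp [hf, hg, hi]
    · have := hobtuse i j hij
      have h1 : 0 ≤ g i * f j := mul_nonneg (hg0 i) (hf0 j)
      nlinarith
  have hww : ⟪w, w⟫ ≤ 0 := by
    calc ⟪w, w⟫ = ⟪v, w⟫ + ⟪u, w⟫ := by rw [hvw, inner_add_left]
    _ ≤ 0 := by linarith
  have hw0 : w = 0 := by
    have := real_inner_self_nonpos.mp hww
    exact this
  have hf0' : f j0 = 0 := by
    have := Fintype.linearIndependent_iff.mp hindep f (by rw [← hw, hw0])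
    exact this j0
  simp [hf, hj0] at hf0'
  linarith
end

section
/- Let ν_1, …, ν_{n+1} ∈ ℝ^{n+1} satisfy ⟨ν_i, ν_j⟩ ≤ 0 for all i ≠ j, and suppose ν_1, …, ν_n are linearly independent. Then every v ∈ span(ν_1, …, ν_n) with ⟨v, ν_j⟩ ≤ 0 for all j = 1, …, n satisfies ⟨v, ν_{n+1}⟩ ≥ 0. In particular, no point of the n-dimensional subspace P := span(ν_1, …, ν_n) lies in the open cone {x ∈ ℝ^{n+1} : ⟨x, ν_i⟩ < 0 for all i = 1, …, n+1}. -/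
/-!
Write `v = ∑ cᵢ νᵢ` and split `v = w - z`, where `w` and `z` are the combinations with
coefficients `cᵢ⁺` and `cᵢ⁻`. The pairwise non-obtuse angles give `⟪z, w⟫ ≤ 0`, and
`⟪v, νᵢ⟫ ≤ 0` gives `⟪v, w⟫ ≤ 0`; hence `‖w‖² ≤ 0`, so `w = 0` and `v = -z` is a non-positive
combination of `ν₁, …, νₙ`, each of which has non-positive inner product with `νₙ₊₁`.
-/

open scoped RealInnerProductSpace

section ObtuseFamily

variable {E ι : Type*} [NormedAddCommGroup E] [InnerProductSpace ℝ E] [Fintype ι] {f : ι → E}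

lemma inner_sum_posPart_smul_sum_negPart_smul_nonpos
    (hf : Pairwise fun i j => ⟪f i, f j⟫ ≤ 0) (c : ι → ℝ) :
    ⟪∑ i, (c i)⁺ • f i, ∑ j, (c j)⁻ • f j⟫ ≤ 0 := by
  simp only [sum_inner, inner_sum, real_inner_smul_left, real_inner_smul_right]
  refine Finset.sum_nonpos fun i _ => Finset.sum_nonpos fun j _ => ?_
  obtain rfl | hij := eq_or_ne i j
  · rcases le_total (c i) 0 with h | h <;> simp [h]
  · exact mul_nonpos_of_nonneg_of_nonpos (negPart_nonneg _)
      (mul_nonpos_of_nonneg_of_nonpos (posPart_nonneg _) (hf hij.symm))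

lemma sum_posPart_smul_eq_zero (hf : Pairwise fun i j => ⟪f i, f j⟫ ≤ 0) {c : ι → ℝ}
    (hc : ∀ i, ⟪∑ j, c j • f j, f i⟫ ≤ 0) :
    ∑ i, (c i)⁺ • f i = 0 := by
  set w := ∑ i, (c i)⁺ • f i
  set z := ∑ i, (c i)⁻ • f i
  have hv : ∑ j, c j • f j = w - z := by
    simp only [w, z, ← Finset.sum_sub_distrib, ← sub_smul, posPart_sub_negPart]
  have hvw : ⟪w - z, w⟫ ≤ 0 := by
    rw [← hv, inner_sum]
    exact Finset.sum_nonpos fun i _ => by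
      rw [real_inner_smul_right]
      exact mul_nonpos_of_nonneg_of_nonpos (posPart_nonneg _) (hc i)
  have hzw : ⟪z, w⟫ ≤ 0 := by
    rw [real_inner_comm]
    exact inner_sum_posPart_smul_sum_negPart_smul_nonpos hf c
  rw [inner_sub_left] at hvw
  exact real_inner_self_nonpos.1 (by linarith)

lemma inner_nonneg_of_mem_span_of_inner_nonpos (hf : Pairwise fun i j => ⟪f i, f j⟫ ≤ 0)
    {v u : E} (hv : v ∈ Submodule.span ℝ (Set.range f)) (hvf : ∀ i, ⟪v, f i⟫ ≤ 0)
    (hfu : ∀ i, ⟪f i, u⟫ ≤ 0) :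
    0 ≤ ⟪v, u⟫ := by
  obtain ⟨c, rfl⟩ := (Submodule.mem_span_range_iff_exists_fun ℝ).1 hv
  have hv_neg : ∑ i, c i • f i = -∑ i, (c i)⁻ • f i := by
    rw [← zero_sub, ← sum_posPart_smul_eq_zero hf hvf]
    simp only [← Finset.sum_sub_distrib, ← sub_smul, posPart_sub_negPart]
  rw [hv_neg, inner_neg_left, sum_inner, neg_nonneg]
  exact Finset.sum_nonpos fun i _ => by
    rw [real_inner_smul_left]
    exact mul_nonpos_of_nonneg_of_nonpos (negPart_nonneg _) (hfu i)

end ObtuseFamily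

theorem stmt_14_general (n : ℕ) (ν : Fin (n + 1) → EuclideanSpace ℝ (Fin (n + 1)))
    (hobtuse : ∀ i j, i ≠ j → ⟪ν i, ν j⟫ ≤ 0) :
    (∀ v ∈ Submodule.span ℝ (Set.range fun i : Fin n => ν i.castSucc),
      (∀ i : Fin n, ⟪v, ν i.castSucc⟫ ≤ 0) → 0 ≤ ⟪v, ν (Fin.last n)⟫) ∧
    (∀ x ∈ Submodule.span ℝ (Set.range fun i : Fin n => ν i.castSucc),
      ¬ ∀ i : Fin (n + 1), ⟪x, ν i⟫ < 0) := by
  have hcone : ∀ v ∈ Submodule.span ℝ (Set.range fun i : Fin n => ν i.castSucc),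
      (∀ i : Fin n, ⟪v, ν i.castSucc⟫ ≤ 0) → 0 ≤ ⟪v, ν (Fin.last n)⟫ :=
    fun v hv hvν => inner_nonneg_of_mem_span_of_inner_nonpos
      (fun i j hij => hobtuse _ _ ((Fin.castSucc_injective n).ne hij)) hv hvν
      (fun i => hobtuse _ _ (Fin.castSucc_lt_last i).ne)
  refine ⟨hcone, fun x hx hneg => ?_⟩
  exact (hcone x hx fun i => (hneg _).le).not_gt (hneg (Fin.last n))

/-- Let `ν_1, …, ν_{n+1} ∈ ℝ^{n+1}` have pairwise non-positive inner
products, with `ν_1, …, ν_n` linearly independent. Then every `v ∈ span(ν_1, …, ν_n)` with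
`⟪v, ν_j⟫ ≤ 0` for `j ≤ n` satisfies `⟪v, ν_{n+1}⟫ ≥ 0`; in particular no point of
`span(ν_1, …, ν_n)` lies in the open cone `{x : ⟪x, ν_i⟫ < 0 ∀ i}`. -/
theorem stmt_14 (n : ℕ) (ν : Fin (n + 1) → EuclideanSpace ℝ (Fin (n + 1)))
    (hobtuse : ∀ i j, i ≠ j → ⟪ν i, ν j⟫ ≤ 0)
    (hindep : LinearIndependent ℝ (fun i : Fin n => ν i.castSucc)) :
    (∀ v ∈ Submodule.span ℝ (Set.range fun i : Fin n => ν i.castSucc),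
      (∀ i : Fin n, ⟪v, ν i.castSucc⟫ ≤ 0) → 0 ≤ ⟪v, ν (Fin.last n)⟫) ∧
    (∀ x ∈ Submodule.span ℝ (Set.range fun i : Fin n => ν i.castSucc),
      ¬ ∀ i : Fin (n + 1), ⟪x, ν i⟫ < 0) :=
  stmt_14_general n ν hobtuse
end

section
/- For every n ≥ 1 there exist constants δ₀ ∈ (0,1) and c ≥ 1, depending only on n, such that the following holds. Let δ ≤ δ₀ and let Φ : B_2 → ℝ^{n+1} be a C² diffeomorphism onto its image with B_1 ⊆ Φ(B_2), Φ(0) = 0, DΦ|_0 = Id, and sup_{w ∈ B_2}(|Φ(w) − w| + ‖DΦ|_w − Id‖ + ‖D²Φ|_w‖) ≤ δ. Then for every a ∈ B_{1/16}, every n-dimensional linear subspace V ⊆ ℝ^{n+1}, every 0 < r < 1/4, every y ∈ B_r(a), and every x ∈ (a + V) ∩ B_r(a), there exists a point x̃ ∈ Φ^{−1}(a) + D(Φ^{−1})|_a(V) with |x̃ − Φ^{−1}(a)| ≤ (1 + cδ)·r and |Φ^{−1}(y) − x̃| ≤ 2|y − x| + c·sup_{B_2}‖D²Φ‖·r². 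-/
/-!
Let `L = DΦ(a')` with `Φ a' = a`. Since `‖L - id‖ ≤ δ ≤ 1/2`, `L` is invertible with
`(1 - δ)‖z‖ ≤ ‖L z‖`, and the mean value inequality for `Φ - id` gives likewise
`(1 - δ)‖y' - a'‖ ≤ ‖y - a‖ < r`. Take `x̃ = a' + L⁻¹(x - a)`. Then
`L(y' - x̃) = (y - x) - (Φ y' - Φ a' - L(y' - a'))`, and by the first-order Taylor estimate the
last term is at most `sup ‖D²Φ‖ · ‖y' - a'‖² ≤ 4 sup ‖D²Φ‖ r²`.
-/

open Metric

theorem le_ciSup₂_of_bddAbove_image {α β : Type*} [ConditionallyCompleteLattice β] {s : Set α}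
    {f : α → β} (hf : BddAbove (f '' s)) {w : α} (hw : w ∈ s) : f w ≤ ⨆ w ∈ s, f w := by
  obtain ⟨C, hC⟩ := hf
  refine le_ciSup₂ (f := fun w (_ : w ∈ s) => f w) ⟨C, ?_⟩ w hw
  rintro _ ⟨_, ⟨v, rfl⟩, ⟨hv, rfl⟩⟩
  exact hC ⟨v, hv, rfl⟩

theorem le_one_add_two_mul_of_one_sub_mul_le {δ u r : ℝ} (hδ0 : 0 ≤ δ) (hδ : δ ≤ 1 / 2)
    (hu : 0 ≤ u) (h : (1 - δ) * u ≤ r) : u ≤ (1 + 2 * δ) * r := by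
  have hu2 : u ≤ 2 * r := by nlinarith
  nlinarith [mul_le_mul_of_nonneg_left hu2 hδ0]

section NearIdentity

open ContinuousLinearMap

variable {E F : Type*} [NormedAddCommGroup E] [NormedSpace ℝ E] [NormedAddCommGroup F]
  [NormedSpace ℝ F] {s : Set E} {a b : E}

theorem Convex.one_sub_mul_norm_sub_le_norm_image_sub (hs : Convex ℝ s) {f : E → E} {δ : ℝ}
    (hf : ∀ z ∈ s, DifferentiableAt ℝ f z)
    (hδ : ∀ z ∈ s, ‖fderiv ℝ f z - ContinuousLinearMap.id ℝ E‖ ≤ δ)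
    (ha : a ∈ s) (hb : b ∈ s) : (1 - δ) * ‖b - a‖ ≤ ‖f b - f a‖ := by
  have h := hs.norm_image_sub_le_of_norm_fderiv_le' hf hδ ha hb
  rw [id_apply, ← norm_neg, neg_sub] at h
  linarith [norm_sub_norm_le (b - a) (f b - f a)]

theorem ContinuousLinearMap.one_sub_mul_norm_le_norm_apply {L : E →L[ℝ] E} {δ : ℝ}
    (hL : ‖L - ContinuousLinearMap.id ℝ E‖ ≤ δ) (z : E) : (1 - δ) * ‖z‖ ≤ ‖L z‖ := by
  simpa using convex_univ.one_sub_mul_norm_sub_le_norm_image_sub (fun _ _ => L.differentiableAt)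
    (fun _ _ => by rwa [L.fderiv]) (Set.mem_univ 0) (Set.mem_univ z)

theorem ContinuousLinearMap.surjective_of_norm_sub_id_lt_one [CompleteSpace E] {L : E →L[ℝ] E}
    (hL : ‖L - ContinuousLinearMap.id ℝ E‖ < 1) : Function.Surjective L := by
  have hunit : IsUnit (1 - (1 - L)) :=
    isUnit_one_sub_of_norm_lt_one (by rwa [norm_sub_rev, one_def])
  rw [sub_sub_cancel] at hunit
  exact (isUnit_iff_bijective.mp hunit).2

theorem Convex.norm_image_sub_sub_fderiv_le (hs : Convex ℝ s) {f : E → F} {S : ℝ}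
    (hf : ∀ z ∈ s, DifferentiableAt ℝ f z) (hf' : ∀ z ∈ s, DifferentiableAt ℝ (fderiv ℝ f) z)
    (hS : ∀ z ∈ s, ‖fderiv ℝ (fderiv ℝ f) z‖ ≤ S) (ha : a ∈ s) (hb : b ∈ s) :
    ‖f b - f a - fderiv ℝ f a (b - a)‖ ≤ S * ‖b - a‖ ^ 2 := by
  have hseg : segment ℝ a b ⊆ s := hs.segment_subset ha hb
  have hS0 : 0 ≤ S := (norm_nonneg (fderiv ℝ (fderiv ℝ f) a)).trans (hS a ha)
  have hbound : ∀ z ∈ segment ℝ a b, ‖fderiv ℝ f z - fderiv ℝ f a‖ ≤ S * ‖b - a‖ := fun z hz =>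
    calc ‖fderiv ℝ f z - fderiv ℝ f a‖ ≤ S * ‖z - a‖ :=
          hs.norm_image_sub_le_of_norm_fderiv_le hf' hS ha (hseg hz)
      _ ≤ S * ‖b - a‖ := by gcongr; exact norm_sub_le_of_mem_segment hz
  calc ‖f b - f a - fderiv ℝ f a (b - a)‖ ≤ S * ‖b - a‖ * ‖b - a‖ :=
        (convex_segment a b).norm_image_sub_le_of_norm_fderiv_le' (fun z hz => hf z (hseg hz))
          hbound (left_mem_segment ℝ a b) (right_mem_segment ℝ a b)
    _ = S * ‖b - a‖ ^ 2 := by ring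

theorem Convex.norm_sub_add_le_of_fderiv_apply_eq (hs : Convex ℝ s) {f : E → E} {S : ℝ}
    {v x : E} (hf : ∀ z ∈ s, DifferentiableAt ℝ f z)
    (hf' : ∀ z ∈ s, DifferentiableAt ℝ (fderiv ℝ f) z) (hS : ∀ z ∈ s, ‖fderiv ℝ (fderiv ℝ f) z‖ ≤ S)
    (hL : ‖fderiv ℝ f a - ContinuousLinearMap.id ℝ E‖ ≤ 1 / 2) (hv : fderiv ℝ f a v = x - f a)
    (ha : a ∈ s) (hb : b ∈ s) :
    ‖b - (a + v)‖ ≤ 2 * ‖f b - x‖ + 2 * S * ‖b - a‖ ^ 2 := by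
  have hsplit : fderiv ℝ f a (b - (a + v)) = (f b - x) - (f b - f a - fderiv ℝ f a (b - a)) := by
    rw [sub_add_eq_sub_sub, map_sub _ (b - a), hv]
    abel
  have hlow := one_sub_mul_norm_le_norm_apply hL (b - (a + v))
  rw [hsplit] at hlow
  linarith [norm_sub_le (f b - x) (f b - f a - fderiv ℝ f a (b - a)),
    hs.norm_image_sub_sub_fderiv_le hf hf' hS ha hb]

theorem Convex.exists_fderiv_preimage_affine_approx [CompleteSpace E] (hs : Convex ℝ s)
    {f : E → E} {δ S r : ℝ} (hf : ∀ z ∈ s, DifferentiableAt ℝ f z)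
    (hf' : ∀ z ∈ s, DifferentiableAt ℝ (fderiv ℝ f) z)
    (hδ : ∀ z ∈ s, ‖fderiv ℝ f z - ContinuousLinearMap.id ℝ E‖ ≤ δ) (hδ0 : 0 ≤ δ)
    (hδ2 : δ ≤ 1 / 2) (hS : ∀ z ∈ s, ‖fderiv ℝ (fderiv ℝ f) z‖ ≤ S) (V : Submodule ℝ E)
    {x : E} (ha : a ∈ s) (hxV : x - f a ∈ V) (hxr : ‖x - f a‖ ≤ r) :
    ∃ xt, fderiv ℝ f a (xt - a) ∈ V ∧ ‖xt - a‖ ≤ (1 + 2 * δ) * r ∧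
      ∀ b ∈ s, ‖f b - f a‖ ≤ r → ‖b - xt‖ ≤ 2 * ‖f b - x‖ + 8 * S * r ^ 2 := by
  have hLa : ‖fderiv ℝ f a - ContinuousLinearMap.id ℝ E‖ ≤ 1 / 2 := (hδ a ha).trans hδ2
  obtain ⟨v, hv⟩ := surjective_of_norm_sub_id_lt_one (hLa.trans_lt (by norm_num)) (x - f a)
  have hvr : ‖v‖ ≤ (1 + 2 * δ) * r := le_one_add_two_mul_of_one_sub_mul_le hδ0 hδ2
    (norm_nonneg v) (hv ▸ one_sub_mul_norm_le_norm_apply (hδ a ha) v |>.trans hxr)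
  refine ⟨a + v, by rwa [add_sub_cancel_left, hv], by rwa [add_sub_cancel_left], fun b hb hbr => ?_⟩
  have hba : ‖b - a‖ ≤ 2 * r := by
    have := le_one_add_two_mul_of_one_sub_mul_le hδ0 hδ2 (norm_nonneg _)
      ((hs.one_sub_mul_norm_sub_le_norm_image_sub hf hδ ha hb).trans hbr)
    nlinarith [norm_nonneg (f b - f a)]
  have hS0 : 0 ≤ S := (norm_nonneg (fderiv ℝ (fderiv ℝ f) a)).trans (hS a ha)
  calc ‖b - (a + v)‖ ≤ 2 * ‖f b - x‖ + 2 * S * ‖b - a‖ ^ 2 :=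
        hs.norm_sub_add_le_of_fderiv_apply_eq hf hf' hS hLa hv ha hb
    _ ≤ 2 * ‖f b - x‖ + 2 * S * (2 * r) ^ 2 := by gcongr
    _ = 2 * ‖f b - x‖ + 8 * S * r ^ 2 := by ring

end NearIdentity

theorem stmt_15_general (n : ℕ) :
    ∃ δ₀ c : ℝ, 0 < δ₀ ∧ δ₀ < 1 ∧ 1 ≤ c ∧
      ∀ δ : ℝ, 0 ≤ δ → δ ≤ δ₀ →
      ∀ Φ : EuclideanSpace ℝ (Fin (n + 1)) → EuclideanSpace ℝ (Fin (n + 1)),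
        ContDiffOn ℝ 2 Φ (ball 0 2) →
        Set.InjOn Φ (ball 0 2) →
        ball (0 : EuclideanSpace ℝ (Fin (n + 1))) 1 ⊆ Φ '' ball 0 2 →
        Φ 0 = 0 →
        fderiv ℝ Φ 0 = ContinuousLinearMap.id ℝ (EuclideanSpace ℝ (Fin (n + 1))) →
        (∀ w ∈ ball (0 : EuclideanSpace ℝ (Fin (n + 1))) 2,
          ‖Φ w - w‖ +
            ‖fderiv ℝ Φ w - ContinuousLinearMap.id ℝ (EuclideanSpace ℝ (Fin (n + 1)))‖ +
            ‖fderiv ℝ (fderiv ℝ Φ) w‖ ≤ δ) →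
      ∀ a ∈ ball (0 : EuclideanSpace ℝ (Fin (n + 1))) (1 / 16),
      ∀ V : Submodule ℝ (EuclideanSpace ℝ (Fin (n + 1))), Module.finrank ℝ V = n →
      ∀ r : ℝ, 0 < r → r < 1 / 4 →
      ∀ y ∈ ball a r,
      ∀ x ∈ {p : EuclideanSpace ℝ (Fin (n + 1)) |
          p - a ∈ (V : Set (EuclideanSpace ℝ (Fin (n + 1))))} ∩ ball a r,
      ∀ a' ∈ ball (0 : EuclideanSpace ℝ (Fin (n + 1))) 2, Φ a' = a →
      ∃ xt : EuclideanSpace ℝ (Fin (n + 1)),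
        xt - a' ∈ ⇑(fderiv ℝ Φ a') ⁻¹' (V : Set (EuclideanSpace ℝ (Fin (n + 1)))) ∧
        ‖xt - a'‖ ≤ (1 + c * δ) * r ∧
        ∀ y' ∈ ball (0 : EuclideanSpace ℝ (Fin (n + 1))) 2, Φ y' = y →
          ‖y' - xt‖ ≤ 2 * ‖y - x‖ +
            c * (⨆ w ∈ ball (0 : EuclideanSpace ℝ (Fin (n + 1))) 2,
              ‖fderiv ℝ (fderiv ℝ Φ) w‖) * r ^ 2 := by
  refine ⟨1 / 2, 8, by norm_num, by norm_num, by norm_num, ?_⟩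
  rintro δ hδ0 hδ Φ hΦ - - - - hbound a - V - r hr - y hy x ⟨hxV, hx⟩ a' ha' rfl
  set s := ball (0 : EuclideanSpace ℝ (Fin (n + 1))) 2
  have hΦd : ∀ z ∈ s, DifferentiableAt ℝ Φ z := fun z hz =>
    (hΦ.differentiableOn (by norm_num)).differentiableAt (isOpen_ball.mem_nhds hz)
  have hΦ'd : ∀ z ∈ s, DifferentiableAt ℝ (fderiv ℝ Φ) z := fun z hz =>
    ((hΦ.fderiv_of_isOpen (m := 1) isOpen_ball (by norm_num)).differentiableOn
      (by norm_num)).differentiableAt (isOpen_ball.mem_nhds hz)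
  have hD : ∀ z ∈ s, ‖fderiv ℝ Φ z - ContinuousLinearMap.id ℝ _‖ ≤ δ := fun z hz => by
    linarith [hbound z hz, norm_nonneg (Φ z - z), norm_nonneg (fderiv ℝ (fderiv ℝ Φ) z)]
  have hS : ∀ z ∈ s, ‖fderiv ℝ (fderiv ℝ Φ) z‖ ≤ ⨆ w ∈ s, ‖fderiv ℝ (fderiv ℝ Φ) w‖ := by
    refine fun z hz => le_ciSup₂_of_bddAbove_image
      (f := fun w => ‖fderiv ℝ (fderiv ℝ Φ) w‖) ⟨δ, ?_⟩ hz
    rintro _ ⟨w, hw, rfl⟩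
    linarith [hbound w hw, norm_nonneg (Φ w - w),
      norm_nonneg (fderiv ℝ Φ w - ContinuousLinearMap.id ℝ _)]
  rw [mem_ball_iff_norm] at hx hy
  obtain ⟨xt, hxtV, hxta, hxt⟩ := (convex_ball _ _).exists_fderiv_preimage_affine_approx hΦd hΦ'd
    hD hδ0 hδ hS V ha' hxV hx.le
  refine ⟨xt, hxtV, hxta.trans (by gcongr; norm_num), ?_⟩
  rintro y' hy' rfl
  exact hxt y' hy' hy.le

/-- (Claim 3 in the paper.) For a `C²` diffeomorphism `Φ` close to the
identity, points close to an affine plane `a + V` are mapped by `Φ^{-1}` close to the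
affine plane `Φ^{-1}(a) + D(Φ^{-1})|_a(V)`, up to an error quadratic in the scale. -/
theorem stmt_15 (n : ℕ) (hn : 1 ≤ n) :
    ∃ δ₀ c : ℝ, 0 < δ₀ ∧ δ₀ < 1 ∧ 1 ≤ c ∧
      ∀ δ : ℝ, 0 ≤ δ → δ ≤ δ₀ →
      ∀ Φ : EuclideanSpace ℝ (Fin (n + 1)) → EuclideanSpace ℝ (Fin (n + 1)),
        ContDiffOn ℝ 2 Φ (ball 0 2) →
        Set.InjOn Φ (ball 0 2) →
        ball (0 : EuclideanSpace ℝ (Fin (n + 1))) 1 ⊆ Φ '' ball 0 2 →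
        Φ 0 = 0 →
        fderiv ℝ Φ 0 = ContinuousLinearMap.id ℝ (EuclideanSpace ℝ (Fin (n + 1))) →
        (∀ w ∈ ball (0 : EuclideanSpace ℝ (Fin (n + 1))) 2,
          ‖Φ w - w‖ +
            ‖fderiv ℝ Φ w - ContinuousLinearMap.id ℝ (EuclideanSpace ℝ (Fin (n + 1)))‖ +
            ‖fderiv ℝ (fderiv ℝ Φ) w‖ ≤ δ) →
      ∀ a ∈ ball (0 : EuclideanSpace ℝ (Fin (n + 1))) (1 / 16),
      ∀ V : Submodule ℝ (EuclideanSpace ℝ (Fin (n + 1))), Module.finrank ℝ V = n →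
      ∀ r : ℝ, 0 < r → r < 1 / 4 →
      ∀ y ∈ ball a r,
      ∀ x ∈ {p : EuclideanSpace ℝ (Fin (n + 1)) |
          p - a ∈ (V : Set (EuclideanSpace ℝ (Fin (n + 1))))} ∩ ball a r,
      ∀ a' ∈ ball (0 : EuclideanSpace ℝ (Fin (n + 1))) 2, Φ a' = a →
      ∃ xt : EuclideanSpace ℝ (Fin (n + 1)),
        xt - a' ∈ ⇑(fderiv ℝ Φ a') ⁻¹' (V : Set (EuclideanSpace ℝ (Fin (n + 1)))) ∧
        ‖xt - a'‖ ≤ (1 + c * δ) * r ∧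
        ∀ y' ∈ ball (0 : EuclideanSpace ℝ (Fin (n + 1))) 2, Φ y' = y →
          ‖y' - xt‖ ≤ 2 * ‖y - x‖ +
            c * (⨆ w ∈ ball (0 : EuclideanSpace ℝ (Fin (n + 1))) 2,
              ‖fderiv ℝ (fderiv ℝ Φ) w‖) * r ^ 2 :=
  stmt_15_general n
end
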